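/- arXiv:1708.00188 — 2 statements merged into one kernel-verified Lean document; each statement's English description precedes it below -/
import Mathlib

section
/- For a connected graph G and a connected graph H, if D̃ is an outer-connected dominating set of G, then T = D̃ × V(H) is an outer-connected dominating set of the Cartesian product G □ H; consequently γ̃c(G □ H) ≤ γ̃c(G) · |V(H)|. -/
open SimpleGraph

/-- `S` is a dominating set of `G`. -/
def IsDomSet {α : Type*} (G : SimpleGraph α) (S : Set α) : Prop :=
  ∀ v, v ∉ S → ∃ u ∈ S, G.Adj u v

/-- `S` is an outer-connected dominating set of `G`: it dominates `G` and the
subgraph induced on the complement of `S` is connected. -/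
def IsOCDomSet {α : Type*} (G : SimpleGraph α) (S : Set α) : Prop :=
  IsDomSet G S ∧ (G.induce (Sᶜ : Set α)).Connected

/-- `S` is a total dominating set of `G`. -/
def IsTotalDomSet {α : Type*} (G : SimpleGraph α) (S : Set α) : Prop :=
  ∀ v, ∃ u ∈ S, G.Adj u v

/-- The domination number `γ(G)`. -/
noncomputable def domNum {α : Type*} (G : SimpleGraph α) : ℕ :=
  sInf {n | ∃ S : Set α, IsDomSet G S ∧ S.ncard = n}

/-- The outer-connected domination number `γ̃c(G)`. -/
noncomputable def ocDomNum {α : Type*} (G : SimpleGraph α) : ℕ :=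
  sInf {n | ∃ S : Set α, IsOCDomSet G S ∧ S.ncard = n}

/-- The total domination number `γ_t(G)`. -/
noncomputable def totalDomNum {α : Type*} (G : SimpleGraph α) : ℕ :=
  sInf {n | ∃ S : Set α, IsTotalDomSet G S ∧ S.ncard = n}

/-- The minimum degree `δ(G)`. -/
noncomputable def minDeg {α : Type*} (G : SimpleGraph α) : ℕ :=
  sInf {d | ∃ v, (G.neighborSet v).ncard = d}

/-- The lexicographic product `G ∘ H`. -/
def lexProd {α β : Type*} (G : SimpleGraph α) (H : SimpleGraph β) :
    SimpleGraph (α × β) where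
  Adj x y := G.Adj x.1 y.1 ∨ (x.1 = y.1 ∧ H.Adj x.2 y.2)
  symm := by
    constructor
    rintro x y (h | ⟨h1, h2⟩)
    · exact Or.inl h.symm
    · exact Or.inr ⟨h1.symm, h2.symm⟩
  loopless := by
    constructor
    rintro x (h | ⟨_, h⟩)
    · exact G.loopless.irrefl _ h
    · exact H.loopless.irrefl _ h

/-- The corona product `G ∘c H`: one copy of `G` and, for each vertex `x` of `G`,
a copy of `H` whose vertices are all joined to `x`. -/
def corona {α β : Type*} (G : SimpleGraph α) (H : SimpleGraph β) :
    SimpleGraph (α ⊕ α × β) where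
  Adj x y :=
    match x, y with
    | Sum.inl a, Sum.inl b => G.Adj a b
    | Sum.inl a, Sum.inr (b, _) => a = b
    | Sum.inr (a, _), Sum.inl b => a = b
    | Sum.inr (a, u), Sum.inr (b, v) => a = b ∧ H.Adj u v
  symm := by
    constructor
    rintro (a | ⟨a, u⟩) (b | ⟨b, v⟩) h
    · exact G.adj_symm h
    · exact h.symm
    · exact h.symm
    · exact ⟨h.1.symm, h.2.symm⟩
  loopless := by
    constructor
    rintro (a | ⟨a, u⟩) h
    · exact G.loopless.irrefl a h
    · exact H.loopless.irrefl u h.2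

/-- The direct (tensor) product of the complete graphs `K_{n 0}, …, K_{n (t-1)}`:
two `t`-tuples are adjacent iff they differ in every coordinate. -/
def directProdComplete (t : ℕ) (n : Fin t → ℕ) :
    SimpleGraph (∀ i : Fin t, Fin (n i)) where
  Adj x y := x ≠ y ∧ ∀ i, x i ≠ y i
  symm := by
    constructor
    rintro x y ⟨h1, h2⟩
    exact ⟨h1.symm, fun i => (h2 i).symm⟩
  loopless := ⟨fun x h => h.1 rfl⟩


/-! Outside `D × V(H)` the product `G □ H` is the product of `G[V(G) ∖ D]` with `H`, so the
complement is connected as a product of connected graphs; a vertex `(a, b)` with `a ∉ D`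
is dominated by `(u, b)` for any `u ∈ D` dominating `a` in `G`. Applied to a minimum
outer-connected dominating set of `G`, this bounds `γ̃c(G □ H)`. -/

section

variable {α β : Type*} {G : SimpleGraph α} {H : SimpleGraph β} {D : Set α}

theorem IsDomSet.prod_univ (hD : IsDomSet G D) :
    IsDomSet (G □ H) (D ×ˢ (Set.univ : Set β)) := by
  rintro ⟨a, b⟩ hab
  obtain ⟨u, hu, hua⟩ := hD a fun ha => hab ⟨ha, trivial⟩
  exact ⟨(u, b), ⟨hu, trivial⟩, boxProd_adj_left.mpr hua⟩

variable (G H D) in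
def induceComplProdUnivIso :
    (G □ H).induce (D ×ˢ (Set.univ : Set β))ᶜ ≃g G.induce Dᶜ □ H where
  toFun x := (⟨x.1.1, fun ha => x.2 ⟨ha, trivial⟩⟩, x.1.2)
  invFun x := ⟨(x.1.1, x.2), fun h => x.1.2 h.1⟩
  left_inv _ := rfl
  right_inv _ := rfl
  map_rel_iff' := by simp [Subtype.ext_iff]

theorem IsOCDomSet.prod_univ (hH : H.Connected) (hD : IsOCDomSet G D) :
    IsOCDomSet (G □ H) (D ×ˢ (Set.univ : Set β)) :=
  ⟨hD.1.prod_univ, (induceComplProdUnivIso G H D).connected_iff.mpr (hD.2.boxProd hH)⟩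

theorem ocDomNum_le_ncard (hD : IsOCDomSet G D) : ocDomNum G ≤ D.ncard :=
  Nat.sInf_le ⟨D, hD, rfl⟩

theorem exists_isOCDomSet_ncard_eq_ocDomNum (hD : IsOCDomSet G D) :
    ∃ S : Set α, IsOCDomSet G S ∧ S.ncard = ocDomNum G :=
  Nat.sInf_mem (s := {n | ∃ S : Set α, IsOCDomSet G S ∧ S.ncard = n})
    ⟨D.ncard, D, hD, rfl⟩

end

theorem stmt_17_general {α β : Type*} [Fintype β]
    (G : SimpleGraph α) (H : SimpleGraph β)
    (hH : H.Connected)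
    (D : Set α) (hD : IsOCDomSet G D) :
    IsOCDomSet (G.boxProd H) (D ×ˢ (Set.univ : Set β)) ∧
    ocDomNum (G.boxProd H) ≤ ocDomNum G * Fintype.card β := by
  refine ⟨hD.prod_univ hH, ?_⟩
  obtain ⟨S, hS, hS_card⟩ := exists_isOCDomSet_ncard_eq_ocDomNum hD
  calc ocDomNum (G □ H)
      ≤ (S ×ˢ (Set.univ : Set β)).ncard := ocDomNum_le_ncard (hS.prod_univ hH)
    _ = ocDomNum G * Fintype.card β := by
      rw [Set.ncard_prod, hS_card, Set.ncard_univ, Nat.card_eq_fintype_card]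

/-- If `D̃` is an outer-connected dominating set of `G`, then `D̃ × V(H)` is an
outer-connected dominating set of `G □ H`; consequently
`γ̃c(G □ H) ≤ γ̃c(G) · |V(H)|`. -/
theorem stmt_17 {α β : Type*} [Fintype α] [Fintype β]
    (G : SimpleGraph α) (H : SimpleGraph β)
    (hG : G.Connected) (hH : H.Connected)
    (D : Set α) (hD : IsOCDomSet G D) :
    IsOCDomSet (G.boxProd H) (D ×ˢ (Set.univ : Set β)) ∧
    ocDomNum (G.boxProd H) ≤ ocDomNum G * Fintype.card β :=
  stmt_17_general G H hH D hD
end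

section
/- Let G = K_{n_1} × K_{n_2} × ⋯ × K_{n_t} be the direct product of complete graphs with t ≥ 3 and n_i ≥ t + 1 for all i. Then γ̃c(G) = t + 1; in particular, the set of 'constant' vertices {(j, j, …, j) : 0 ≤ j ≤ t} is a minimum outer-connected dominating set. -/
open SimpleGraph

/-!
The `t + 1` constant tuples dominate: a vertex takes at most `t` values, so it avoids some
`j ≤ t` in every coordinate and is adjacent to `(j, …, j)`. Any two vertices have a common
neighbour that is not constant, so the complement of the constant tuples induces a connected
graph of diameter at most two.

No `t` vertices `d₀, …, d_{t-1}` dominate: the diagonal vertex `v i = dᵢ i` agrees with `dⱼ`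
in coordinate `j`, and if it is one of them, say `d_k`, changing its `k`-th coordinate to a
value unused by every `dⱼ` gives an undominated vertex outside the list.
-/

lemma exists_fin_val_notMem {m : ℕ} (s : Finset ℕ) (h : s.card < m) :
    ∃ w : Fin m, (w : ℕ) ∉ s := by
  obtain ⟨w, hw, hws⟩ :=
    Finset.exists_mem_notMem_of_card_lt_card (h.trans_eq (Finset.card_range m).symm)
  exact ⟨⟨w, Finset.mem_range.mp hw⟩, hws⟩

lemma Set.Finite.exists_fin_subset_range {α : Type*} [Nonempty α] {s : Set α} {t : ℕ}
    (hs : s.Finite) (h : s.ncard ≤ t) : ∃ d : Fin t → α, s ⊆ Set.range d := by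
  classical
  have hl : hs.toFinset.toList.length ≤ t := by
    rwa [Finset.length_toList, ← Set.ncard_eq_toFinset_card _ hs]
  refine ⟨fun j => hs.toFinset.toList.getD j (Classical.arbitrary α), fun x hx => ?_⟩
  obtain ⟨k, hk, rfl⟩ :=
    List.mem_iff_getElem.mp (Finset.mem_toList.mpr (hs.mem_toFinset.mpr hx))
  exact ⟨⟨k, by omega⟩, List.getD_eq_getElem _ _ hk⟩

lemma SimpleGraph.connected_induce_of_exists_common_adj {V : Type*} {G : SimpleGraph V}
    {s : Set V} (hs : s.Nonempty)
    (h : ∀ x ∈ s, ∀ y ∈ s, ∃ z ∈ s, G.Adj x z ∧ G.Adj z y) :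
    (G.induce s).Connected := by
  have : Nonempty s := hs.to_subtype
  refine ⟨fun ⟨x, hx⟩ ⟨y, hy⟩ => ?_⟩
  obtain ⟨z, hz, hxz, hzy⟩ := h x hx y hy
  exact (show (G.induce s).Adj ⟨x, hx⟩ ⟨z, hz⟩ from hxz).reachable.trans
    (show (G.induce s).Adj ⟨z, hz⟩ ⟨y, hy⟩ from hzy).reachable

lemma ocDomNum_eq_of_isOCDomSet {V : Type*} {G : SimpleGraph V} {S : Set V}
    (hS : IsOCDomSet G S) (hmin : ∀ S', IsDomSet G S' → S.ncard ≤ S'.ncard) :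
    ocDomNum G = S.ncard :=
  le_antisymm (Nat.sInf_le ⟨S, hS, rfl⟩)
    (le_csInf ⟨_, S, hS, rfl⟩ fun _ ⟨S', hS', hm⟩ => hm ▸ hmin S' hS'.1)

namespace directProdComplete

variable {t : ℕ} {n : Fin t → ℕ}

lemma adj_iff (ht : 0 < t) {x y : ∀ i, Fin (n i)} :
    (directProdComplete t n).Adj x y ↔ ∀ i, x i ≠ y i :=
  ⟨And.right, fun h => ⟨fun hxy => h ⟨0, ht⟩ (congrFun hxy _), h⟩⟩

lemma not_adj_of_apply_eq {x y : ∀ i, Fin (n i)} (i : Fin t) (h : x i = y i) :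
    ¬ (directProdComplete t n).Adj x y :=
  fun hxy => hxy.2 i h

lemma exists_notMem_range_forall_not_adj (ht : 2 ≤ t) (hn : ∀ i, t < n i)
    (d : Fin t → ∀ i, Fin (n i)) :
    ∃ v ∉ Set.range d, ∀ j, ¬ (directProdComplete t n).Adj (d j) v := by
  classical
  let v₀ : ∀ i, Fin (n i) := fun i => d i i
  by_cases hv₀ : v₀ ∈ Set.range d
  swap
  · exact ⟨v₀, hv₀, fun j => not_adj_of_apply_eq j rfl⟩
  obtain ⟨k, hk⟩ := hv₀
  obtain ⟨b, hb⟩ := exists_fin_val_notMem (Finset.univ.image fun j => (d j k : ℕ))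
    (Finset.card_image_le.trans_lt (by simpa using hn k))
  refine ⟨Function.update v₀ k b, ?_, fun j => ?_⟩
  · rintro ⟨j, hj⟩
    exact hb <| Finset.mem_image.mpr
      ⟨j, Finset.mem_univ _, by rw [hj, Function.update_self]⟩
  by_cases hjk : j = k
  · subst hjk
    have : Nontrivial (Fin t) := Fin.nontrivial_iff_two_le.mpr ht
    obtain ⟨i, hi⟩ := exists_ne j
    exact not_adj_of_apply_eq i (by rw [Function.update_of_ne hi, ← hk])
  · exact not_adj_of_apply_eq j (by rw [Function.update_of_ne hjk])

lemma lt_ncard_of_isDomSet (ht : 2 ≤ t) (hn : ∀ i, t < n i) {S : Set (∀ i, Fin (n i))}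
    (hS : IsDomSet (directProdComplete t n) S) : t < S.ncard := by
  by_contra! hle
  have : Nonempty (∀ i, Fin (n i)) := ⟨fun i => ⟨0, by have := hn i; omega⟩⟩
  obtain ⟨d, hd⟩ := S.toFinite.exists_fin_subset_range hle
  obtain ⟨v, hv, hundom⟩ := exists_notMem_range_forall_not_adj ht hn d
  obtain ⟨u, hu, huv⟩ := hS v fun hvS => hv (hd hvS)
  obtain ⟨j, rfl⟩ := hd hu
  exact hundom j huv

lemma exists_adj_adj_val_ne {i₀ i₁ : Fin t} (hi : i₀ ≠ i₁) (hn : ∀ i, 3 ≤ n i)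
    (hn₀ : 4 ≤ n i₀) (x y : ∀ i, Fin (n i)) :
    ∃ z : ∀ i, Fin (n i), (z i₀ : ℕ) ≠ z i₁ ∧
      (directProdComplete t n).Adj x z ∧ (directProdComplete t n).Adj z y := by
  classical
  have ht : 0 < t := Fin.pos i₀
  choose z hz using fun i => exists_fin_val_notMem (m := n i) {(x i : ℕ), (y i : ℕ)}
    (Finset.card_le_two.trans_lt (hn i))
  obtain ⟨w, hw⟩ := exists_fin_val_notMem (m := n i₀)
    {(x i₀ : ℕ), (y i₀ : ℕ), (z i₁ : ℕ)} (Finset.card_le_three.trans_lt hn₀)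
  have hz' : ∀ i,
      (Function.update z i₀ w i : ℕ) ∉ ({(x i : ℕ), (y i : ℕ)} : Finset ℕ) := by
    intro i
    rcases eq_or_ne i i₀ with rfl | hii
    · rw [Function.update_self]
      exact fun h => hw (by simp at h ⊢; tauto)
    · rw [Function.update_of_ne hii]
      exact hz i
  refine ⟨Function.update z i₀ w, ?_, (adj_iff ht).mpr fun i h => ?_,
    (adj_iff ht).mpr fun i h => ?_⟩
  · rw [Function.update_self, Function.update_of_ne hi.symm]
    exact fun h => hw (by simp [h])
  · exact hz' i (by simp [h])
  · exact hz' i (by simp [h])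

def const (hn : ∀ i, t + 1 ≤ n i) (j : Fin (t + 1)) : ∀ i, Fin (n i) :=
  fun i => Fin.castLE (hn i) j

variable (hn : ∀ i, t + 1 ≤ n i)

lemma range_const :
    Set.range (const hn) = {x : ∀ i, Fin (n i) | ∃ j ≤ t, ∀ i, (x i : ℕ) = j} := by
  ext x
  constructor
  · rintro ⟨j, rfl⟩
    exact ⟨j, Nat.lt_succ_iff.mp j.isLt, fun i => rfl⟩
  · rintro ⟨j, hj, hx⟩
    exact ⟨⟨j, Nat.lt_succ_of_le hj⟩, funext fun i => Fin.ext (hx i).symm⟩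

lemma ncard_range_const (ht : 0 < t) : (Set.range (const hn)).ncard = t + 1 := by
  rw [Set.ncard_range_of_injective, Nat.card_eq_fintype_card, Fintype.card_fin]
  intro j k hjk
  exact Fin.ext (congrArg Fin.val (congrFun hjk ⟨0, ht⟩) :)

lemma isDomSet_range_const (ht : 0 < t) :
    IsDomSet (directProdComplete t n) (Set.range (const hn)) := by
  intro v _
  obtain ⟨j, hj⟩ := exists_fin_val_notMem (m := t + 1)
    (Finset.univ.image fun i => (v i : ℕ)) (Finset.card_image_le.trans_lt (by simp))
  exact ⟨const hn j, ⟨j, rfl⟩, (adj_iff ht).mpr fun i h =>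
    hj (Finset.mem_image.mpr ⟨i, Finset.mem_univ _, congrArg Fin.val h.symm⟩)⟩

lemma notMem_range_const {z : ∀ i, Fin (n i)} {i₀ i₁ : Fin t}
    (h : (z i₀ : ℕ) ≠ z i₁) :
    z ∉ Set.range (const hn) := by
  rintro ⟨j, rfl⟩
  exact h rfl

lemma connected_induce_compl_range_const (ht : 3 ≤ t) :
    ((directProdComplete t n).induce (Set.range (const hn))ᶜ).Connected := by
  have hi : (⟨0, by omega⟩ : Fin t) ≠ ⟨1, by omega⟩ := by simp
  have hn₃ : ∀ i, 3 ≤ n i := fun i => by have := hn i; omega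
  have hn₄ : ∀ i, 4 ≤ n i := fun i => by have := hn i; omega
  let x₀ : ∀ i, Fin (n i) := fun i => ⟨0, by have := hn i; omega⟩
  obtain ⟨z, hz, -⟩ := exists_adj_adj_val_ne hi hn₃ (hn₄ _) x₀ x₀
  refine connected_induce_of_exists_common_adj ⟨z, notMem_range_const hn hz⟩
    fun x _ y _ => ?_
  obtain ⟨z, hz, hxz, hzy⟩ := exists_adj_adj_val_ne hi hn₃ (hn₄ _) x y
  exact ⟨z, notMem_range_const hn hz, hxz, hzy⟩

end directProdComplete

open directProdComplete in
/-- For the direct product `G = K_{n₁} × ⋯ × K_{n_t}` with `t ≥ 3` and each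
`n_i ≥ t + 1`, we have `γ̃c(G) = t + 1`, and the set of constant tuples
`{(j,…,j) : 0 ≤ j ≤ t}` is a minimum outer-connected dominating set. -/
theorem stmt_19 (t : ℕ) (ht : 3 ≤ t) (n : Fin t → ℕ) (hn : ∀ i, t + 1 ≤ n i) :
    ocDomNum (directProdComplete t n) = t + 1 ∧
    IsOCDomSet (directProdComplete t n)
      {x : ∀ i : Fin t, Fin (n i) | ∃ j ≤ t, ∀ i, (x i : ℕ) = j} ∧
    {x : ∀ i : Fin t, Fin (n i) | ∃ j ≤ t, ∀ i, (x i : ℕ) = j}.ncard = t + 1 := by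
  rw [← range_const hn]
  have hcard := ncard_range_const hn (by omega)
  have hOC : IsOCDomSet (directProdComplete t n) (Set.range (const hn)) :=
    ⟨isDomSet_range_const hn (by omega), connected_induce_compl_range_const hn ht⟩
  have hmin : ∀ S, IsDomSet (directProdComplete t n) S →
      (Set.range (const hn)).ncard ≤ S.ncard :=
    fun S hS => hcard.trans_le (lt_ncard_of_isDomSet (by omega) hn hS)
  exact ⟨(ocDomNum_eq_of_isOCDomSet hOC hmin).trans hcard, hOC, hcard⟩
end
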